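/- Let F be a group, let G be a non-abelian irreducible F-group, let m be a natural number, and let N be a normal F-subgroup of G^m. Then N = G^m if and only if the image of N under each of the m coordinate projections G^m → G is a nontrivial subgroup of G. -/

import Mathlib

section FGroupDefs

variable (F : Type*) [Group F]

/-- A subgroup of an `F`-group is a *normal `F`-subgroup* if it is normal and
stable under the `F`-action. -/
def IsNormalFSubgroup {G : Type*} [Group G] [MulDistribMulAction F G]
    (H : Subgroup G) : Prop :=
  H.Normal ∧ ∀ (f : F) (x : G), x ∈ H → f • x ∈ H

/-- An *irreducible `F`-group* is a nontrivial `F`-group whose only normal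
`F`-subgroups are the trivial subgroup and the whole group. -/
def IsIrreducibleFGroup (G : Type*) [Group G] [MulDistribMulAction F G] : Prop :=
  Nontrivial G ∧ ∀ H : Subgroup G, IsNormalFSubgroup F H → H = ⊥ ∨ H = ⊤

/-- `[s]_F`: the smallest normal `F`-subgroup containing the set `s`. -/
def normalFClosure {G : Type*} [Group G] [MulDistribMulAction F G] (s : Set G) :
    Subgroup G :=
  sInf {H : Subgroup G | IsNormalFSubgroup F H ∧ s ⊆ H}

/-- A group homomorphism is an `F`-group morphism if it commutes with the `F`-actions. -/
def IsFHom {G G' : Type*} [Group G] [Group G'] [MulDistribMulAction F G]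
    [MulDistribMulAction F G'] (φ : G →* G') : Prop :=
  ∀ (f : F) (x : G), φ (f • x) = f • φ x

/-- `h_F(G)`: the number of `F`-group endomorphisms of `G`. -/
noncomputable def hF (G : Type*) [Group G] [MulDistribMulAction F G] : ℕ :=
  Nat.card {φ : G →* G // IsFHom F φ}

/-- Two `F`-groups are isomorphic if there is a bijective group homomorphism
between them commuting with the `F`-actions. -/
def IsFIso (G G' : Type*) [Group G] [Group G'] [MulDistribMulAction F G]
    [MulDistribMulAction F G'] : Prop :=
  ∃ e : G ≃* G', ∀ (f : F) (x : G), e (f • x) = f • e x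

end FGroupDefs

/-! A normal `F`-subgroup `N` of `G^m` with nontrivial projections has full projections, by
irreducibility. Since `G` is non-abelian, pick `a, b` with `⁅a, b⁆ ≠ 1` and `n ∈ N` with
`n i = b`; then `⁅single i a, n⁆ = single i ⁅a, b⁆ ∈ N`, so the normal `F`-subgroup
`{g | single i g ∈ N}` of `G` is nontrivial, hence all of `G`. The coordinate embeddings thus
land in `N`, and they generate `G^m`. -/

section FGroup

variable {F G G' : Type*} [Group F] [Group G] [Group G'] [MulDistribMulAction F G]
  [MulDistribMulAction F G']

theorem IsNormalFSubgroup.map {H : Subgroup G} (hH : IsNormalFSubgroup F H) {φ : G →* G'}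
    (hφ : IsFHom F φ) (hφ_surj : Function.Surjective φ) : IsNormalFSubgroup F (H.map φ) :=
  ⟨hH.1.map φ hφ_surj, by rintro f _ ⟨x, hx, rfl⟩; exact ⟨f • x, hH.2 f x hx, hφ f x⟩⟩

theorem IsNormalFSubgroup.comap {H : Subgroup G'} (hH : IsNormalFSubgroup F H) {φ : G →* G'}
    (hφ : IsFHom F φ) : IsNormalFSubgroup F (H.comap φ) :=
  ⟨hH.1.comap φ, fun f x hx => by simpa only [Subgroup.mem_comap, hφ f x] using hH.2 f _ hx⟩

theorem IsIrreducibleFGroup.eq_top_of_ne_bot (hG : IsIrreducibleFGroup F G) {H : Subgroup G}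
    (hH : IsNormalFSubgroup F H) (hH_ne : H ≠ ⊥) : H = ⊤ :=
  (hG.2 H hH).resolve_left hH_ne

end FGroup

section Pi

variable {F ι : Type*} [Group F] {G : ι → Type*} [∀ i, Group (G i)]
  [∀ i, MulDistribMulAction F (G i)]

theorem isFHom_evalMonoidHom (i : ι) : IsFHom F (Pi.evalMonoidHom G i) :=
  fun _ _ => rfl

theorem isFHom_mulSingle [DecidableEq ι] (i : ι) : IsFHom F (MonoidHom.mulSingle G i) := by
  intro f x
  funext j
  by_cases hj : j = i
  · subst hj; simp
  · simp [Pi.mulSingle_eq_of_ne hj]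

end Pi

open scoped commutatorElement in
theorem Subgroup.Normal.mulSingle_commutatorElement_mem {ι : Type*} [DecidableEq ι] {G : ι → Type*}
    [∀ i, Group (G i)] {N : Subgroup (∀ i, G i)} (hN : N.Normal) {n : ∀ i, G i} (hn : n ∈ N)
    (i : ι) (a : G i) : Pi.mulSingle i ⁅a, n i⁆ ∈ N := by
  have hcomm : ⁅Pi.mulSingle i a, n⁆ = Pi.mulSingle i ⁅a, n i⁆ := by
    funext j
    by_cases hj : j = i
    · subst hj; simp [commutatorElement_def]
    · simp [commutatorElement_def, Pi.mulSingle_eq_of_ne hj]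
  rw [← hcomm, commutatorElement_def]
  exact N.mul_mem (hN.conj_mem n hn _) (N.inv_mem hn)

/-- for a non-abelian irreducible `F`-group `G`, a normal
`F`-subgroup of `G^m` is everything iff each coordinate projection is nontrivial. -/
theorem normalFSubgroup_top_iff_proj_ne_bot
    {F G : Type*} [Group F] [Group G] [MulDistribMulAction F G]
    (hirr : IsIrreducibleFGroup F G)
    (hna : ¬ ∀ a b : G, a * b = b * a)
    (m : ℕ) (N : Subgroup (Fin m → G))
    (hN : IsNormalFSubgroup F N) :
    N = ⊤ ↔ ∀ i : Fin m,
      Subgroup.map (Pi.evalMonoidHom (fun _ : Fin m => G) i) N ≠ ⊥ := by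
  have : Nontrivial G := hirr.1
  have hsurj (i : Fin m) := Function.surjective_eval (β := fun _ : Fin m => G) i
  constructor
  · rintro rfl i
    rw [Subgroup.map_top_of_surjective _ (hsurj i)]
    exact top_ne_bot
  · intro hproj
    push Not at hna
    obtain ⟨a, b, hab⟩ := hna
    have hmulSingle (i : Fin m) : N.comap (MonoidHom.mulSingle _ i) = ⊤ := by
      refine hirr.eq_top_of_ne_bot (hN.comap (isFHom_mulSingle i)) ?_
      have hb : b ∈ N.map (Pi.evalMonoidHom _ i) := by
        rw [hirr.eq_top_of_ne_bot (hN.map (isFHom_evalMonoidHom i) (hsurj i)) (hproj i)]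
        trivial
      obtain ⟨n, hn, rfl⟩ := hb
      intro hbot
      apply hab
      rw [← commutatorElement_eq_one_iff_mul_comm, ← Subgroup.mem_bot, ← hbot]
      exact hN.1.mulSingle_commutatorElement_mem hn i a
    refine eq_top_iff.2 fun x _ => Subgroup.pi_mem_of_mulSingle_mem x fun i => ?_
    exact (hmulSingle i).ge (Subgroup.mem_top (x i))
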